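/- arXiv:2407.07867 — 2 statements merged into one kernel-verified Lean document; each statement's English description precedes it below -/
import Mathlib

section
/- Let V be a finite-dimensional complex vector space with complex structure operator I given by multiplication by i, and let η be an alternating ℂ-multilinear p-form on V with values in ℂ, regarded (together with its complex conjugate η̄) as a ℂ-valued alternating ℝ-multilinear p-form on the underlying real vector space of V. Then the 2p-form (−1)^{p(p−1)/2}·i^p·(η∧η̄) is weakly positive; that is, for all x₁,…,x_p ∈ V, the complex number (−1)^{p(p−1)/2}·i^p·(η∧η̄)(x₁, I x₁, x₂, I x₂, …, x_p, I x_p) is a nonnegative real number. -/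
/-! In the shuffle expansion of `(η ∧ η̄)(x₁, I x₁, …, x_p, I x_p)` a term vanishes unless each
half of the shuffle takes exactly one vector from every pair `xᵢ, I xᵢ`, because `η` is
`ℂ`-linear and alternating. The surviving shuffles are indexed by `ε : Fin p → Bool`, recording
which of `xᵢ, I xᵢ` is fed to `η`. Counting inversions, such a shuffle has sign
`(-1)^(p(p-1)/2) · (-1)^#ε`, and each index `i` contributes the factor
`(-1)^εᵢ · i^εᵢ · conj (i^(1-εᵢ)) = -i`, so every surviving term equals
`(-1)^(p(p-1)/2) (-i)^p |η x|²`. Hence `(-1)^(p(p-1)/2) i^p (η ∧ η̄)(…) = 2^p |η x|²`. -/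

open scoped BigOperators Classical

noncomputable section

namespace Stmt

variable {V : Type*}

/-- Wedge product of forms with values in a commutative ring, normalized by the
shuffle convention: `(α∧β)(v₁,…,v_{k+l}) = Σ over (k,l)-shuffles σ of
sgn(σ)·α(v_{σ(1)},…,v_{σ(k)})·β(v_{σ(k+1)},…,v_{σ(k+l)})`. -/
def wedge {R : Type*} [CommRing R] (k l : ℕ) (α : (Fin k → V) → R) (β : (Fin l → V) → R) :
    (Fin (k + l) → V) → R := fun v =>
  ∑ σ : Equiv.Perm (Fin (k + l)),
    if (StrictMono fun i : Fin k => σ (Fin.castAdd l i)) ∧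
        (StrictMono fun i : Fin l => σ (Fin.natAdd k i)) then
      ((Equiv.Perm.sign σ : ℤ) : R) *
        (α (fun i => v (σ (Fin.castAdd l i))) * β (fun i => v (σ (Fin.natAdd k i))))
    else 0

/-- The interleaved tuple `x₁, I x₁, x₂, I x₂, …, x_p, I x_p`, where `I` is
multiplication by `i`. -/
def interleave [SMul ℂ V] (p : ℕ) (x : Fin p → V) : Fin (p + p) → V := fun j =>
  if j.1 % 2 = 0 then x ⟨j.1 / 2, by have := j.2; omega⟩
  else Complex.I • x ⟨j.1 / 2, by have := j.2; omega⟩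

end Stmt

section

open Equiv Finset Complex ComplexConjugate

theorem Equiv.Perm.sign_eq_prod_of_shuffle {k l : ℕ} {σ : Perm (Fin (k + l))}
    (h₁ : StrictMono fun i : Fin k => σ (Fin.castAdd l i))
    (h₂ : StrictMono fun j : Fin l => σ (Fin.natAdd k j)) :
    sign σ = ∏ i : Fin k, ∏ j : Fin l,
      if σ (Fin.castAdd l i) < σ (Fin.natAdd k j) then 1 else -1 := by
  have hcc (i j : Fin k) : Fin.castAdd l i < Fin.castAdd l j ↔ i < j := Iff.rfl
  have hnn (i j : Fin l) : Fin.natAdd k i < Fin.natAdd k j ↔ i < j := by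
    simp only [Fin.lt_def, Fin.val_natAdd]; omega
  have hcn (i : Fin k) (j : Fin l) : Fin.castAdd l i < Fin.natAdd k j := by
    simp only [Fin.lt_def, Fin.val_castAdd, Fin.val_natAdd]; omega
  rw [σ.sign_eq_prod_prod_Ioi]
  simp_rw [← filter_lt_eq_Ioi, prod_filter, Fin.prod_univ_add]
  simp +contextual [hcc, hnn, hcn, (hcn _ _).not_gt, h₁.lt_iff_lt, h₂.lt_iff_lt]

lemma Bool.toNat_add_toNat_not (b : Bool) : b.toNat + (!b).toNat = 1 := by
  cases b <;> rfl

namespace Stmt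

variable {p : ℕ}

def pairIndex (j : Fin (p + p)) : Fin p := ⟨j / 2, by omega⟩

lemma pairIndex_monotone : Monotone (pairIndex (p := p)) :=
  fun _ _ h => Nat.div_le_div_right (Fin.le_def.1 h)

def pairShuffleFun (ε : Fin p → Bool) : Fin (p + p) → Fin (p + p) :=
  Fin.append (fun i => ⟨2 * i + (ε i).toNat, by have := (ε i).toNat_le; omega⟩)
    (fun i => ⟨2 * i + (!ε i).toNat, by have := (!ε i).toNat_le; omega⟩)

lemma pairShuffleFun_injective (ε : Fin p → Bool) : Function.Injective (pairShuffleFun ε) := by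
  intro a b h
  induction a using Fin.addCases <;> induction b using Fin.addCases <;>
    simp only [pairShuffleFun, Fin.append_left, Fin.append_right, Fin.ext_iff, Fin.val_castAdd,
      Fin.val_natAdd] at h ⊢ <;>
    grind [Bool.toNat_le, Bool.toNat_add_toNat_not]

def pairShuffle (p : ℕ) (ε : Fin p → Bool) : Perm (Fin (p + p)) :=
  Equiv.ofBijective (pairShuffleFun ε)
    (Finite.injective_iff_bijective.1 (pairShuffleFun_injective ε))

@[simp]
lemma pairShuffle_castAdd (ε : Fin p → Bool) (i : Fin p) :
    (pairShuffle p ε (Fin.castAdd p i) : ℕ) = 2 * i + (ε i).toNat := by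
  simp [pairShuffle, pairShuffleFun]

@[simp]
lemma pairShuffle_natAdd (ε : Fin p → Bool) (i : Fin p) :
    (pairShuffle p ε (Fin.natAdd p i) : ℕ) = 2 * i + (!ε i).toNat := by
  simp only [pairShuffle, pairShuffleFun, ofBijective_apply, Fin.append_right]

lemma pairShuffle_injective (p : ℕ) : Function.Injective (pairShuffle p) := by
  intro ε ε' h
  funext i
  have := congrArg (fun σ : Perm (Fin (p + p)) => (σ (Fin.castAdd p i) : ℕ)) h
  simp only [pairShuffle_castAdd, Nat.add_left_cancel_iff] at this
  revert this
  cases ε i <;> cases ε' i <;> simp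

lemma strictMono_pairShuffle_castAdd (ε : Fin p → Bool) :
    StrictMono fun i => pairShuffle p ε (Fin.castAdd p i) := by
  intro i j h
  simp only [Fin.lt_def, pairShuffle_castAdd] at h ⊢
  have := (ε i).toNat_le
  omega

lemma strictMono_pairShuffle_natAdd (ε : Fin p → Bool) :
    StrictMono fun i => pairShuffle p ε (Fin.natAdd p i) := by
  intro i j h
  simp only [Fin.lt_def, pairShuffle_natAdd] at h ⊢
  have := (!ε i).toNat_le
  omega

lemma sign_pairShuffle (ε : Fin p → Bool) :
    Perm.sign (pairShuffle p ε) = (-1) ^ (p * (p - 1) / 2) * ∏ i, (-1) ^ (ε i).toNat := by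
  have hcross (i j : Fin p) :
      (if pairShuffle p ε (Fin.castAdd p i) < pairShuffle p ε (Fin.natAdd p j) then 1 else -1 :
        ℤˣ) = (if j < i then -1 else 1) * if j = i then (-1) ^ (ε i).toNat else 1 := by
    simp only [Fin.lt_def, pairShuffle_castAdd, pairShuffle_natAdd]
    have := (ε i).toNat_le
    have := (!ε j).toNat_le
    rcases lt_trichotomy j i with hji | rfl | hji
    · rw [if_neg (by omega), if_pos (Fin.lt_def.1 hji), if_neg hji.ne, mul_one]
    · cases ε j <;> simp
    · rw [if_pos (by omega), if_neg (by omega), if_neg hji.ne', mul_one]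
  rw [Perm.sign_eq_prod_of_shuffle (strictMono_pairShuffle_castAdd ε)
    (strictMono_pairShuffle_natAdd ε)]
  simp_rw [hcross, prod_mul_distrib, prod_ite_eq', mem_univ, if_true, prod_ite, prod_const_one,
    mul_one, prod_const, filter_gt_eq_Iio, Fin.card_Iio, prod_pow_eq_pow_sum]
  rw [Fin.sum_univ_eq_sum_range (fun i => i) p, sum_range_id]

@[simp]
lemma pairIndex_pairShuffle_castAdd (ε : Fin p → Bool) (i : Fin p) :
    pairIndex (pairShuffle p ε (Fin.castAdd p i)) = i := by
  ext
  simp only [pairIndex, pairShuffle_castAdd]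
  have := (ε i).toNat_le
  omega

@[simp]
lemma pairIndex_pairShuffle_natAdd (ε : Fin p → Bool) (i : Fin p) :
    pairIndex (pairShuffle p ε (Fin.natAdd p i)) = i := by
  ext
  simp only [pairIndex, pairShuffle_natAdd]
  have := (!ε i).toNat_le
  omega

lemma eq_pairShuffle {σ : Perm (Fin (p + p))}
    (h₁ : ∀ i, pairIndex (σ (Fin.castAdd p i)) = i)
    (h₂ : ∀ i, pairIndex (σ (Fin.natAdd p i)) = i) :
    σ = pairShuffle p fun i => decide ((σ (Fin.castAdd p i) : ℕ) % 2 = 1) := by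
  ext j
  induction j using Fin.addCases with
  | left i =>
    have hi := congrArg Fin.val (h₁ i)
    simp only [pairIndex] at hi
    rw [pairShuffle_castAdd]
    rcases Nat.mod_two_eq_zero_or_one (σ (Fin.castAdd p i)) with h | h <;>
      simp only [h, zero_ne_one, decide_false, decide_true, Bool.toNat_true, Bool.toNat_false] <;>
      omega
  | right i =>
    have hi := congrArg Fin.val (h₁ i)
    have hi' := congrArg Fin.val (h₂ i)
    simp only [pairIndex] at hi hi'
    have hne : (σ (Fin.castAdd p i) : ℕ) ≠ σ (Fin.natAdd p i) := fun h => by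
      have := congrArg Fin.val (σ.injective (Fin.ext h))
      simp only [Fin.val_castAdd, Fin.val_natAdd] at this
      omega
    rw [pairShuffle_natAdd]
    rcases Nat.mod_two_eq_zero_or_one (σ (Fin.castAdd p i)) with h | h <;>
      simp only [h, zero_ne_one, decide_false, decide_true, Bool.not_false, Bool.not_true,
        Bool.toNat_true, Bool.toNat_false] <;> omega

variable {V : Type*} [AddCommGroup V] [Module ℂ V]

lemma interleave_apply (x : Fin p → V) (j : Fin (p + p)) :
    interleave p x j = I ^ ((j : ℕ) % 2) • x (pairIndex j) := by
  unfold interleave pairIndex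
  rcases Nat.mod_two_eq_zero_or_one j with h | h <;> simp [h]

lemma map_interleave_comp (η : AlternatingMap ℂ V ℂ (Fin p)) (x : Fin p → V)
    (g : Fin p → Fin (p + p)) :
    η (fun i => interleave p x (g i)) =
      (∏ i, I ^ ((g i : ℕ) % 2)) * η (fun i => x (pairIndex (g i))) := by
  simp_rw [interleave_apply]
  exact η.map_smul_univ _ _

lemma pairIndex_eq_of_map_interleave_ne_zero {η : AlternatingMap ℂ V ℂ (Fin p)} {x : Fin p → V}
    {g : Fin p → Fin (p + p)} (hg : StrictMono g) (h : η (fun i => interleave p x (g i)) ≠ 0)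
    (i : Fin p) : pairIndex (g i) = i := by
  rw [map_interleave_comp] at h
  have hinj : Function.Injective fun i => x (pairIndex (g i)) := by
    by_contra hn
    exact h (by rw [η.map_eq_zero_of_not_injective _ hn, mul_zero])
  exact ((pairIndex_monotone.comp hg.monotone).strictMono_of_injective hinj.of_comp).apply_eq

lemma sign_pairShuffle_mul_map_interleave (η : AlternatingMap ℂ V ℂ (Fin p)) (x : Fin p → V)
    (ε : Fin p → Bool) :
    ((Perm.sign (pairShuffle p ε) : ℤ) : ℂ) *
        (η (fun i => interleave p x (pairShuffle p ε (Fin.castAdd p i))) *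
          conj (η (fun i => interleave p x (pairShuffle p ε (Fin.natAdd p i))))) =
      (-1) ^ (p * (p - 1) / 2) * (-I) ^ p * normSq (η x) := by
  have hphase (b : Bool) : (-1) ^ b.toNat * I ^ b.toNat * conj (I ^ (!b).toNat) = -I := by
    cases b <;> simp
  have hmod (b : Bool) (n : ℕ) : (2 * n + b.toNat) % 2 = b.toNat := by
    have := b.toNat_le
    omega
  rw [map_interleave_comp, map_interleave_comp, sign_pairShuffle]
  simp only [pairShuffle_castAdd, pairShuffle_natAdd, pairIndex_pairShuffle_castAdd,
    pairIndex_pairShuffle_natAdd, hmod]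
  calc _ = (-1) ^ (p * (p - 1) / 2) *
        (∏ i, (-1) ^ (ε i).toNat * I ^ (ε i).toNat * conj (I ^ (!ε i).toNat)) *
          (η x * conj (η x)) := by
        push_cast
        simp only [map_mul, map_prod, prod_mul_distrib]
        ring
    _ = _ := by simp_rw [hphase, prod_const, card_univ, Fintype.card_fin, mul_conj]

theorem wedge_conj_interleave (η : AlternatingMap ℂ V ℂ (Fin p)) (x : Fin p → V) :
    wedge p p ⇑η (fun v => conj (η v)) (interleave p x) =
      2 ^ p * ((-1) ^ (p * (p - 1) / 2) * (-I) ^ p * normSq (η x)) := by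
  rw [wedge, ← Fintype.sum_of_injective (pairShuffle p) (pairShuffle_injective p) _ _ ?_
    fun _ => rfl]
  · simp_rw [if_pos (And.intro (strictMono_pairShuffle_castAdd _)
      (strictMono_pairShuffle_natAdd _)), sign_pairShuffle_mul_map_interleave]
    rw [sum_const, card_univ, Fintype.card_fun, Fintype.card_bool, Fintype.card_fin,
      nsmul_eq_mul]
    push_cast
    rfl
  · intro σ hσ
    by_contra hne
    obtain ⟨⟨h₁, h₂⟩, hterm⟩ := ite_ne_right_iff.1 hne
    simp only [ne_eq, mul_eq_zero, map_eq_zero, not_or] at hterm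
    exact hσ ⟨_, (eq_pairShuffle (pairIndex_eq_of_map_interleave_ne_zero h₁ hterm.2.1)
      (pairIndex_eq_of_map_interleave_ne_zero h₂ hterm.2.2)).symm⟩

end Stmt

end

theorem statement0_general {V : Type*} [AddCommGroup V] [Module ℂ V]
    (p : ℕ) (η : AlternatingMap ℂ V ℂ (Fin p)) (x : Fin p → V) :
    ∃ r : ℝ, 0 ≤ r ∧
      (-1 : ℂ) ^ (p * (p - 1) / 2) * Complex.I ^ p *
        Stmt.wedge p p (⇑η) (fun v => starRingEnd ℂ (η v)) (Stmt.interleave p x) = r := by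
  refine ⟨2 ^ p * Complex.normSq (η x), mul_nonneg (by positivity) (Complex.normSq_nonneg _), ?_⟩
  have hI : Complex.I ^ p * (-Complex.I) ^ p = 1 := by
    rw [← mul_pow, mul_neg, Complex.I_mul_I, neg_neg, one_pow]
  have hsign : ((-1 : ℂ) ^ (p * (p - 1) / 2)) ^ 2 = 1 := by
    rw [pow_right_comm, neg_one_sq, one_pow]
  rw [Stmt.wedge_conj_interleave]
  push_cast
  linear_combination (2 ^ p * (Complex.normSq (η x) : ℂ) * ((-1) ^ (p * (p - 1) / 2)) ^ 2) * hI +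
    (2 ^ p * (Complex.normSq (η x) : ℂ)) * hsign

/-- for an alternating `ℂ`-multilinear `p`-form `η` on a finite-dimensional
complex vector space `V`, the `2p`-form `(−1)^{p(p−1)/2}·i^p·(η∧η̄)` is weakly positive. -/
theorem statement0 {V : Type*} [AddCommGroup V] [Module ℂ V] [FiniteDimensional ℂ V]
    (p : ℕ) (η : AlternatingMap ℂ V ℂ (Fin p)) (x : Fin p → V) :
    ∃ r : ℝ, 0 ≤ r ∧
      (-1 : ℂ) ^ (p * (p - 1) / 2) * Complex.I ^ p *
        Stmt.wedge p p (⇑η) (fun v => starRingEnd ℂ (η v)) (Stmt.interleave p x) = r :=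
  statement0_general p η x
end
end

section
/- Let V be a real vector space of dimension 4n and let Ω be an alternating ℂ-bilinear 2-form on V ⊗_ℝ ℂ such that Ω^{n+1} = 0 (the (n+1)-st wedge power of Ω vanishes identically as an alternating (2n+2)-form) and the 4n-form Ωⁿ ∧ Ω̄ⁿ is nonzero, where Ω̄ is the form obtained by applying complex conjugation (induced by v⊗z ↦ v⊗z̄ on V ⊗_ℝ ℂ and conjugation on values). Then the kernel K = { v ∈ V ⊗_ℝ ℂ : v ⌟ Ω = 0 } is a complex subspace of dimension exactly 2n, K ∩ K̄ = 0, and V ⊗_ℝ ℂ = K ⊕ K̄, where K̄ is the image of K under complex conjugation. -/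
open scoped BigOperators Classical TensorProduct

noncomputable section

namespace Stmt

variable {V : Type*}

/-- The index of the `b`-th element of the `i`-th block of two. -/
def pidx (q : ℕ) (i : Fin q) (b : Fin 2) : Fin (q + q) :=
  ⟨2 * i.1 + b.1, by have := i.2; have := b.2; omega⟩

/-- The wedge product `ω₁ ∧ ω₂ ∧ … ∧ ω_q` of a family of `2`-forms, with the shuffle
convention; it is the sum over all permutations `σ` of `{1,…,2q}` increasing on each
of the `q` consecutive blocks of two of `sgn(σ)·∏ᵢ ωᵢ(v_{σ(2i−1)}, v_{σ(2i)})`. -/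
def wedgeMany {R : Type*} [CommRing R] (q : ℕ) (ω : Fin q → ((Fin 2 → V) → R)) :
    (Fin (q + q) → V) → R := fun v =>
  ∑ σ : Equiv.Perm (Fin (q + q)),
    if ∀ i : Fin q, σ (pidx q i 0) < σ (pidx q i 1) then
      ((Equiv.Perm.sign σ : ℤ) : R) * ∏ i : Fin q, ω i (fun b => v (σ (pidx q i b)))
    else 0

/-- A `ℂ`-valued `k`-form on a complex vector space has type `(p,q)` (with `p+q=k`) iff it
transforms by `z^p·z̄^q` under scaling of all arguments by `z ∈ ℂ` (the scaling
characterization of the type decomposition). -/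
def IsTypePQ [SMul ℂ V] (p q : ℕ) {k : ℕ} (α : (Fin k → V) → ℂ) : Prop :=
  ∀ (z : ℂ) (x : Fin k → V),
    α (fun i => z • x i) = z ^ p * (starRingEnd ℂ z) ^ q * α x

end Stmt

/-!
A vector `v ∈ K ∩ K̄` lies in the kernel of every factor of `Ωⁿ ∧ Ω̄ⁿ`. A top-degree alternating
form that is nonzero at `x` forces `x` to be a basis, and expanding `v` in that basis, with `v`
substituted for one `x j` at a time, shows `v = 0`. Hence `dim K + dim K̄ ≤ 4n`, and since
conjugation identifies `K` with `K̄`, `dim K ≤ 2n`. Conversely, if `dim K < 2n` then `Ω` has rank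
at least `2n + 2`, so it admits a symplectic family `e₁, f₁, …, e_{n+1}, f_{n+1}`, on which
`Ω^{n+1}` takes the value `(n+1)! ≠ 0`. Thus `dim K = 2n`, and `K ⊕ K̄` is everything by counting
dimensions.

To use the alternating-map API, the shuffle-normalised wedge of `q` two-forms is identified with
`(2 ^ q)⁻¹` times the alternatization of the product of the forms over the consecutive pairs of slots.
-/

open Equiv Function Module Finset

theorem AlternatingMap.eq_zero_of_map_update_eq_zero {K M N ι : Type*} [Field K] [AddCommGroup M]
    [Module K M] [FiniteDimensional K M] [AddCommGroup N] [Module K N] [Fintype ι] [DecidableEq ι]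
    (f : M [⋀^ι]→ₗ[K] N) (hcard : Fintype.card ι = finrank K M) {x : ι → M} (hx : f x ≠ 0)
    {v : M} (hv : ∀ j, f (update x j v) = 0) : v = 0 := by
  have hli : LinearIndependent K x := by
    by_contra h
    exact hx (f.map_linearDependent x h)
  obtain ⟨c, rfl⟩ : ∃ c : ι → K, ∑ i, c i • x i = v :=
    (Submodule.mem_span_range_iff_exists_fun K).1
      (by rw [hli.span_eq_top_of_card_eq_finrank' hcard]; trivial)
  have hc : ∀ j, c j = 0 := fun j => by
    have := hv j
    rw [f.map_update_sum, sum_eq_single j] at this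
    · simpa [hx] using this
    · intro k _ hkj
      simp [f.map_update_self _ hkj.symm]
    · simp
  simp [hc]

lemma Equiv.Perm.fin_two_eq_one_or_eq_swap (p : Perm (Fin 2)) : p = 1 ∨ p = swap 0 1 := by
  revert p
  decide

lemma Equiv.Perm.card_filter_fin_two_lt {α : Type*} [LinearOrder α] {f : Fin 2 → α}
    (hf : f 0 ≠ f 1) : #{p : Perm (Fin 2) | f (p 0) < f (p 1)} = 1 := by
  have huniv : (univ : Finset (Perm (Fin 2))) = {1, swap 0 1} := by
    ext p
    simpa using p.fin_two_eq_one_or_eq_swap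
  rcases hf.lt_or_gt with h | h <;> simp [huniv, filter_insert, filter_singleton, h, h.not_gt]

namespace CSymplectic

section Blocks

variable (q : ℕ)

def blockEquiv : Fin q × Fin 2 ≃ Fin (q + q) :=
  finProdFinEquiv.trans (finCongr (Nat.mul_two q))

@[simp]
lemma blockEquiv_apply (i : Fin q) (b : Fin 2) : blockEquiv q (i, b) = Stmt.pidx q i b := by
  ext
  simp [blockEquiv, Stmt.pidx, add_comm, mul_comm]

def flipPerm (ε : Fin q → Perm (Fin 2)) : Perm (Fin (q + q)) :=
  (blockEquiv q).permCongr (prodCongrRight ε)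

def blockPerm (τ : Perm (Fin q)) : Perm (Fin (q + q)) :=
  (blockEquiv q).permCongr (prodCongrLeft fun _ => τ)

variable {q}

@[simp]
lemma pidx_inj {i i' : Fin q} {b b' : Fin 2} :
    Stmt.pidx q i b = Stmt.pidx q i' b' ↔ i = i' ∧ b = b' := by
  rw [← blockEquiv_apply, ← blockEquiv_apply, (blockEquiv q).apply_eq_iff_eq, Prod.mk.injEq]

lemma pidx_lt_pidx_iff {i : Fin q} {b b' : Fin 2} :
    Stmt.pidx q i b < Stmt.pidx q i b' ↔ b < b' := by
  rw [Fin.lt_def, Fin.lt_def]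
  simp [Stmt.pidx]

lemma exists_eq_pidx (j : Fin (q + q)) : ∃ i b, j = Stmt.pidx q i b := by
  obtain ⟨⟨i, b⟩, rfl⟩ := (blockEquiv q).surjective j
  exact ⟨i, b, blockEquiv_apply q i b⟩

@[simp]
lemma flipPerm_pidx (ε : Fin q → Perm (Fin 2)) (i : Fin q) (b : Fin 2) :
    flipPerm q ε (Stmt.pidx q i b) = Stmt.pidx q i (ε i b) := by
  simp [flipPerm, permCongr_apply, ← blockEquiv_apply]

@[simp]
lemma blockPerm_pidx (τ : Perm (Fin q)) (i : Fin q) (b : Fin 2) :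
    blockPerm q τ (Stmt.pidx q i b) = Stmt.pidx q (τ i) b := by
  simp [blockPerm, permCongr_apply, ← blockEquiv_apply]

lemma sign_flipPerm (ε : Fin q → Perm (Fin 2)) :
    Perm.sign (flipPerm q ε) = ∏ i, Perm.sign (ε i) := by
  rw [flipPerm, Perm.sign_permCongr, Perm.sign_prodCongrRight]

@[simp]
lemma sign_blockPerm (τ : Perm (Fin q)) : Perm.sign (blockPerm q τ) = 1 := by
  simp [blockPerm, Perm.sign_prodCongrLeft]

lemma blockPerm_injective : Injective (blockPerm q) := fun τ τ' h =>
  Equiv.ext fun i => by simpa using congrArg (· (Stmt.pidx q i 0)) h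

lemma mem_range_blockPerm {σ : Perm (Fin (q + q))} {t : Fin q → Fin q}
    (ht : ∀ i b, σ (Stmt.pidx q i b) = Stmt.pidx q (t i) b) : σ ∈ Set.range (blockPerm q) := by
  have ht_inj : Injective t := fun i i' h =>
    (pidx_inj.1 (σ.injective ((ht i 0).trans (h ▸ (ht i' 0).symm)))).1
  refine ⟨Equiv.ofBijective t (Finite.injective_iff_bijective.1 ht_inj), Equiv.ext fun j => ?_⟩
  obtain ⟨i, b, rfl⟩ := exists_eq_pidx j
  simp [ht]

def pairTuple {W : Type*} (e f : Fin q → W) : Fin (q + q) → W :=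
  fun j => ![e, f] ((blockEquiv q).symm j).2 ((blockEquiv q).symm j).1

@[simp]
lemma pairTuple_pidx {W : Type*} (e f : Fin q → W) (i : Fin q) (b : Fin 2) :
    pairTuple e f (Stmt.pidx q i b) = ![e, f] b i := by
  simp [pairTuple, ← blockEquiv_apply]

end Blocks

section Wedge

variable {R W : Type*} [CommRing R] [AddCommGroup W] [Module R W] {q : ℕ}

def bilinToMultilinear (B : W →ₗ[R] W →ₗ[R] R) : MultilinearMap R (fun _ : Fin 2 => W) R :=
  LinearMap.uncurryLeft ((MultilinearMap.ofSubsingletonₗ R R W R (0 : Fin 1)).toLinearMap ∘ₗ B)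

@[simp]
lemma bilinToMultilinear_apply (B : W →ₗ[R] W →ₗ[R] R) (u : Fin 2 → W) :
    bilinToMultilinear B u = B (u 0) (u 1) := by
  simp [bilinToMultilinear, Fin.tail]

def blockProd (ω : Fin q → W →ₗ[R] W →ₗ[R] R) : MultilinearMap R (fun _ : Fin (q + q) => W) R :=
  ((MultilinearMap.mkPiAlgebra R (Fin q) R).compMultilinearMap
    fun i => bilinToMultilinear (ω i)).domDomCongr
      ((sigmaEquivProd (Fin q) (Fin 2)).trans (blockEquiv q))

@[simp]
lemma blockProd_apply (ω : Fin q → W →ₗ[R] W →ₗ[R] R) (x : Fin (q + q) → W) :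
    blockProd ω x = ∏ i, ω i (x (Stmt.pidx q i 0)) (x (Stmt.pidx q i 1)) := by
  simp [blockProd, Sigma.curry]

lemma sign_mul_apply_perm_fin_two {B : W →ₗ[R] W →ₗ[R] R} (hB : B.IsAlt)
    (p : Perm (Fin 2)) (u : Fin 2 → W) :
    ((Perm.sign p : ℤ) : R) * B (u (p 0)) (u (p 1)) = B (u 0) (u 1) := by
  rcases p.fin_two_eq_one_or_eq_swap with rfl | rfl
  · simp
  · simp [← hB.neg (u 0) (u 1)]

variable {ω : Fin q → W →ₗ[R] W →ₗ[R] R}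

lemma sign_mul_blockProd_comp_flipPerm (hω : ∀ i, (ω i).IsAlt) (ε : Fin q → Perm (Fin 2))
    (x : Fin (q + q) → W) :
    ((Perm.sign (flipPerm q ε) : ℤ) : R) * blockProd ω (x ∘ flipPerm q ε) = blockProd ω x := by
  simp only [blockProd_apply, sign_flipPerm, Units.coe_prod, Int.cast_prod, ← prod_mul_distrib,
    comp_apply, flipPerm_pidx]
  exact prod_congr rfl fun i _ =>
    sign_mul_apply_perm_fin_two (hω i) (ε i) fun b => x (Stmt.pidx q i b)

lemma card_filter_mul_flipPerm_lt (σ : Perm (Fin (q + q))) :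
    #{ε : Fin q → Perm (Fin 2) |
      ∀ i, (σ * flipPerm q ε) (Stmt.pidx q i 0) < (σ * flipPerm q ε) (Stmt.pidx q i 1)} = 1 := by
  calc _ = #(Fintype.piFinset fun i =>
          {p : Perm (Fin 2) | σ (Stmt.pidx q i (p 0)) < σ (Stmt.pidx q i (p 1))}) := by
        congr 1
        ext ε
        simp [Fintype.mem_piFinset]
    _ = 1 := by
        rw [Fintype.card_piFinset]
        exact prod_eq_one fun i _ =>
          Perm.card_filter_fin_two_lt (f := fun b => σ (Stmt.pidx q i b)) (by simp)

/-- Every permutation is uniquely a shuffle followed by flips inside the pairs, and the flips do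
not change the signed terms of the alternatization. -/
theorem alternatization_blockProd_apply (hω : ∀ i, (ω i).IsAlt) (x : Fin (q + q) → W) :
    MultilinearMap.alternatization (blockProd ω) x =
      2 ^ q * Stmt.wedgeMany q (fun i v => ω i (v 0) (v 1)) x := by
  set G : Perm (Fin (q + q)) → R := fun σ => ((Perm.sign σ : ℤ) : R) * blockProd ω (x ∘ σ)
  have hG : ∀ σ ε, G (σ * flipPerm q ε) = G σ := fun σ ε => by
    simp only [G, map_mul, Units.val_mul, Int.cast_mul, Perm.coe_mul, ← comp_assoc]
    rw [mul_assoc, sign_mul_blockProd_comp_flipPerm hω]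
  have hwedge : Stmt.wedgeMany q (fun i v => ω i (v 0) (v 1)) x =
      ∑ σ, if ∀ i, σ (Stmt.pidx q i 0) < σ (Stmt.pidx q i 1) then G σ else 0 := by
    simp [Stmt.wedgeMany, G]
  calc MultilinearMap.alternatization (blockProd ω) x
      = ∑ σ, G σ := by simp [MultilinearMap.alternatization_apply, G, Units.smul_def]
    _ = ∑ σ, ∑ ε : Fin q → Perm (Fin 2),
          if ∀ i, (σ * flipPerm q ε) (Stmt.pidx q i 0) < (σ * flipPerm q ε) (Stmt.pidx q i 1)
          then G σ else 0 := by
        simp only [sum_ite, sum_const_zero, add_zero, sum_const, card_filter_mul_flipPerm_lt,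
          one_smul]
    _ = ∑ ε : Fin q → Perm (Fin 2), ∑ σ,
          if ∀ i, σ (Stmt.pidx q i 0) < σ (Stmt.pidx q i 1) then G σ else 0 := by
        rw [sum_comm]
        refine sum_congr rfl fun ε _ => (Fintype.sum_congr _ _ fun σ => ?_).trans
          (Equiv.sum_comp (Equiv.mulRight (flipPerm q ε))
            fun σ => if ∀ i, σ (Stmt.pidx q i 0) < σ (Stmt.pidx q i 1) then G σ else 0)
        simp only [Equiv.coe_mulRight, hG]
    _ = 2 ^ q * Stmt.wedgeMany q (fun i v => ω i (v 0) (v 1)) x := by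
        simp [hwedge, Fintype.card_perm]

lemma blockProd_eq_zero_of_apply_eq (hω : ∀ i, (ω i).IsAlt) {v : W} (hv : ∀ i, ω i v = 0)
    {x : Fin (q + q) → W} {j : Fin (q + q)} (hj : x j = v) : blockProd ω x = 0 := by
  obtain ⟨i, b, rfl⟩ := exists_eq_pidx j
  rw [blockProd_apply]
  refine prod_eq_zero (mem_univ i) ?_
  match b, hj with
  | 0, hj => simp [hj, hv]
  | 1, hj => rw [← (hω i).neg, hj, hv, LinearMap.zero_apply, neg_zero]

lemma alternatization_blockProd_update_eq_zero (hω : ∀ i, (ω i).IsAlt) {v : W}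
    (hv : ∀ i, ω i v = 0) (x : Fin (q + q) → W) (j : Fin (q + q)) :
    MultilinearMap.alternatization (blockProd ω) (update x j v) = 0 := by
  rw [MultilinearMap.alternatization_apply]
  refine sum_eq_zero fun σ _ => ?_
  rw [MultilinearMap.domDomCongr_apply,
    blockProd_eq_zero_of_apply_eq hω hv (j := σ.symm j) (by simp), smul_zero]

end Wedge

theorem eq_zero_of_wedgeMany_ne_zero {𝕜 W : Type*} [Field 𝕜] [CharZero 𝕜] [AddCommGroup W]
    [Module 𝕜 W] [FiniteDimensional 𝕜 W] {q : ℕ} {ω : Fin q → W →ₗ[𝕜] W →ₗ[𝕜] 𝕜}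
    (hω : ∀ i, (ω i).IsAlt) (hdim : finrank 𝕜 W = q + q) {x : Fin (q + q) → W}
    (hx : Stmt.wedgeMany q (fun i v => ω i (v 0) (v 1)) x ≠ 0) {v : W} (hv : ∀ i, ω i v = 0) :
    v = 0 := by
  refine (MultilinearMap.alternatization (blockProd ω)).eq_zero_of_map_update_eq_zero
    (by simp [hdim]) ?_ (alternatization_blockProd_update_eq_zero hω hv x)
  rw [alternatization_blockProd_apply hω]
  exact mul_ne_zero (pow_ne_zero _ two_ne_zero) hx

section Symplectic

variable {𝕜 W : Type*} [Field 𝕜] [AddCommGroup W] [Module 𝕜 W]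

structure IsSymplecticFamily {ι : Type*} [DecidableEq ι] (B : W →ₗ[𝕜] W →ₗ[𝕜] 𝕜)
    (e f : ι → W) : Prop where
  apply_e_e : ∀ a b, B (e a) (e b) = 0
  apply_f_f : ∀ a b, B (f a) (f b) = 0
  apply_e_f : ∀ a b, B (e a) (f b) = if a = b then 1 else 0

def symplComplement {ι : Type*} (B : W →ₗ[𝕜] W →ₗ[𝕜] 𝕜) (e f : ι → W) : Submodule 𝕜 W :=
  LinearMap.ker (LinearMap.pi fun s : ι ⊕ ι => B (Sum.elim e f s))

variable {ι : Type*} {B : W →ₗ[𝕜] W →ₗ[𝕜] 𝕜} {e f : ι → W}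

lemma mem_symplComplement {u : W} :
    u ∈ symplComplement B e f ↔ ∀ i, B (e i) u = 0 ∧ B (f i) u = 0 := by
  simp [symplComplement, funext_iff, forall_and]

lemma finrank_le_finrank_symplComplement_add [Fintype ι] [FiniteDimensional 𝕜 W] :
    finrank 𝕜 W ≤ finrank 𝕜 (symplComplement B e f) + 2 * Fintype.card ι := by
  set φ := LinearMap.pi fun s : ι ⊕ ι => B (Sum.elim e f s)
  have hrange := (LinearMap.range φ).finrank_le
  rw [Module.finrank_fintype_fun_eq_card, Fintype.card_sum] at hrange
  have := LinearMap.finrank_range_add_finrank_ker φ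
  change finrank 𝕜 W ≤ finrank 𝕜 (LinearMap.ker φ) + _
  omega

variable [DecidableEq ι]

lemma IsSymplecticFamily.apply_f_e (h : IsSymplecticFamily B e f) (hB : B.IsAlt) (a b : ι) :
    B (f a) (e b) = if a = b then -1 else 0 := by
  rw [← hB.neg, h.apply_e_f, eq_comm]
  split_ifs <;> simp_all

lemma IsSymplecticFamily.sub_sum_mem_symplComplement [Fintype ι] (h : IsSymplecticFamily B e f)
    (hB : B.IsAlt) (w : W) :
    w - ∑ i, (B (e i) w • f i - B (f i) w • e i) ∈ symplComplement B e f := by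
  simp [mem_symplComplement, h.apply_e_e, h.apply_f_f, h.apply_e_f, h.apply_f_e hB]

lemma IsSymplecticFamily.symplComplement_le_ker [Fintype ι] (h : IsSymplecticFamily B e f)
    (hB : B.IsAlt) (hU : ∀ u ∈ symplComplement B e f, ∀ w ∈ symplComplement B e f, B u w = 0) :
    symplComplement B e f ≤ LinearMap.ker B := by
  intro u hu
  ext w
  have hw := hU u hu _ (h.sub_sum_mem_symplComplement hB w)
  simp [← hB.neg _ u, mem_symplComplement.1 hu] at hw
  simp [← hB.neg w u, hw]

lemma IsSymplecticFamily.snoc {k : ℕ} {e f : Fin k → W} (h : IsSymplecticFamily B e f)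
    (hB : B.IsAlt) {u w : W} (hu : u ∈ symplComplement B e f) (hw : w ∈ symplComplement B e f)
    (huw : B u w = 1) :
    IsSymplecticFamily B (Fin.snoc (α := fun _ => W) e u) (Fin.snoc (α := fun _ => W) f w) := by
  rw [mem_symplComplement] at hu hw
  have hu' : ∀ i, B u (e i) = 0 ∧ B u (f i) = 0 := fun i => by simp [← hB.neg _ u, hu i]
  have hw' : ∀ i, B w (e i) = 0 ∧ B w (f i) = 0 := fun i => by simp [← hB.neg _ w, hw i]
  constructor <;> intro a b <;> induction a using Fin.lastCases <;>
    induction b using Fin.lastCases <;>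
    simp [hB _, hu, hw, hu', hw', huw, h.apply_e_e, h.apply_f_f, h.apply_e_f,
      Fin.castSucc_ne_last, (Fin.castSucc_ne_last _).symm]

/-- The slack `+ 1` costs nothing since alternating forms have even rank; it is what makes the
final bound `2n ≤ dim K` sharp. -/
theorem exists_isSymplecticFamily [FiniteDimensional 𝕜 W] (hB : B.IsAlt) :
    ∀ k, finrank 𝕜 (LinearMap.ker B) + 2 * k ≤ finrank 𝕜 W + 1 →
      ∃ e f : Fin k → W, IsSymplecticFamily B e f
  | 0, _ => ⟨Fin.elim0, Fin.elim0, ⟨fun a => a.elim0, fun a => a.elim0, fun a => a.elim0⟩⟩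
  | k + 1, hk => by
    obtain ⟨e, f, h⟩ := exists_isSymplecticFamily hB k (by omega)
    have hU : ¬ symplComplement B e f ≤ LinearMap.ker B := fun hle => by
      have := Submodule.finrank_mono hle
      have := finrank_le_finrank_symplComplement_add (B := B) (e := e) (f := f)
      simp only [Fintype.card_fin] at this
      omega
    obtain ⟨u, hu, w, hw, huw⟩ :
        ∃ u ∈ symplComplement B e f, ∃ w ∈ symplComplement B e f, B u w ≠ 0 := by
      by_contra! hflat
      exact hU (h.symplComplement_le_ker hB hflat)
    exact ⟨_, _, h.snoc hB hu (Submodule.smul_mem _ (B u w)⁻¹ hw) (by simp [huw])⟩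

variable {q : ℕ} {e f : Fin q → W}

lemma IsSymplecticFamily.eq_and_ne_of_apply_ne_zero (h : IsSymplecticFamily B e f)
    (hB : B.IsAlt) {a a' : Fin q} {b b' : Fin 2} (hne : B (![e, f] b a) (![e, f] b' a') ≠ 0) :
    a = a' ∧ b ≠ b' := by
  match b, b' with
  | 0, 0 => simp [h.apply_e_e] at hne
  | 0, 1 => simpa [h.apply_e_f] using hne
  | 1, 0 => simpa [h.apply_f_e hB, eq_comm] using hne
  | 1, 1 => simp [h.apply_f_f] at hne

lemma IsSymplecticFamily.mem_range_blockPerm (h : IsSymplecticFamily B e f) (hB : B.IsAlt)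
    {σ : Perm (Fin (q + q))} (hlt : ∀ i, σ (Stmt.pidx q i 0) < σ (Stmt.pidx q i 1))
    (hne : ∀ i, B (pairTuple e f (σ (Stmt.pidx q i 0))) (pairTuple e f (σ (Stmt.pidx q i 1))) ≠ 0) :
    σ ∈ Set.range (blockPerm q) := by
  have key : ∀ i, ∃ a, ∀ b, σ (Stmt.pidx q i b) = Stmt.pidx q a b := fun i => by
    obtain ⟨a, b₀, h₀⟩ := exists_eq_pidx (σ (Stmt.pidx q i 0))
    obtain ⟨a', b₁, h₁⟩ := exists_eq_pidx (σ (Stmt.pidx q i 1))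
    have hne := hne i
    rw [h₀, h₁, pairTuple_pidx, pairTuple_pidx] at hne
    obtain ⟨rfl, -⟩ := h.eq_and_ne_of_apply_ne_zero hB hne
    have hlt := hlt i
    rw [h₀, h₁, pidx_lt_pidx_iff] at hlt
    obtain ⟨rfl, rfl⟩ : b₀ = 0 ∧ b₁ = 1 := by omega
    exact ⟨a, fun b => match b with | 0 => h₀ | 1 => h₁⟩
  choose t ht using key
  exact CSymplectic.mem_range_blockPerm ht

theorem IsSymplecticFamily.wedgeMany_pairTuple (h : IsSymplecticFamily B e f) (hB : B.IsAlt) :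
    Stmt.wedgeMany q (fun _ v => B (v 0) (v 1)) (pairTuple e f) = q.factorial := by
  rw [Stmt.wedgeMany, ← Fintype.sum_of_injective (blockPerm q) blockPerm_injective (fun _ => 1)]
  · simp [Fintype.card_perm]
  · intro σ hσ
    split_ifs with hlt
    · by_contra hterm
      exact hσ <| h.mem_range_blockPerm hB hlt fun i =>
        prod_ne_zero_iff.1 (right_ne_zero_of_mul hterm) i (mem_univ i)
    · rfl
  · intro τ
    simp [pidx_lt_pidx_iff, h.apply_e_f]

theorem finrank_add_one_lt_of_wedgeMany_eq_zero [CharZero 𝕜] [FiniteDimensional 𝕜 W]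
    (hB : B.IsAlt) (h : ∀ x, Stmt.wedgeMany q (fun _ v => B (v 0) (v 1)) x = 0) :
    finrank 𝕜 W + 1 < finrank 𝕜 (LinearMap.ker B) + 2 * q := by
  by_contra! hq
  obtain ⟨e, f, hef⟩ := exists_isSymplecticFamily hB q hq
  have := hef.wedgeMany_pairTuple hB
  rw [h] at this
  exact Nat.cast_ne_zero.2 q.factorial_ne_zero this.symm

end Symplectic

section Conjugation

open ComplexConjugate

variable {W : Type*} [AddCommGroup W] [Module ℂ W]

def conjForm (B : W →ₗ[ℂ] W →ₗ[ℂ] ℂ) (c : W →ₗ⋆[ℂ] W) : W →ₗ[ℂ] W →ₗ[ℂ] ℂ :=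
  LinearMap.mk₂ ℂ (fun u w => conj (B (c u) (c w))) (by simp) (by simp) (by simp) (by simp)

variable {B : W →ₗ[ℂ] W →ₗ[ℂ] ℂ} {c : W →ₗ⋆[ℂ] W}

@[simp]
lemma conjForm_apply (u w : W) : conjForm B c u w = conj (B (c u) (c w)) := rfl

lemma isAlt_conjForm (hB : B.IsAlt) : (conjForm B c).IsAlt := fun v => by simp [hB _]

lemma conjForm_apply_eq_zero_iff (hc : Involutive c) {v : W} :
    conjForm B c v = 0 ↔ B (c v) = 0 := by
  simp only [LinearMap.ext_iff, conjForm_apply, LinearMap.zero_apply, map_eq_zero]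
  exact ⟨fun h w => hc w ▸ h (c w), fun h w => h (c w)⟩

lemma finrank_ker_conjForm (hc : Involutive c) :
    finrank ℂ (LinearMap.ker (conjForm B c)) = finrank ℂ (LinearMap.ker B) := by
  have hmem : ∀ v, v ∈ LinearMap.ker (conjForm B c) ↔ c v ∈ LinearMap.ker B := fun v =>
    conjForm_apply_eq_zero_iff hc
  let j : LinearMap.ker (conjForm B c) ≃+ LinearMap.ker B :=
    { toFun := fun v => ⟨c v, (hmem v).1 v.2⟩
      invFun := fun v => ⟨c v, (hmem _).2 (by simp [hc v])⟩
      left_inv := fun v => Subtype.ext (hc v)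
      right_inv := fun v => Subtype.ext (hc v)
      map_add' := fun u v => Subtype.ext (map_add c (u : W) v) }
  exact congrArg Cardinal.toNat <|
    rank_eq_of_equiv_equiv (starRingEnd ℂ) j star_involutive.bijective
      fun z v => Subtype.ext (c.map_smulₛₗ z (v : W))

theorem eq_zero_of_wedgeMany_conj_ne_zero [FiniteDimensional ℂ W] {n : ℕ} (hB : B.IsAlt)
    (hc : Involutive c) (hdim : finrank ℂ W = n + n + (n + n)) {x : Fin (n + n + (n + n)) → W}
    (hx : Stmt.wedgeMany (n + n)
      (fun i => if (i : ℕ) < n then (fun v => B (v 0) (v 1))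
        else (fun v => conj (B (c (v 0)) (c (v 1))))) x ≠ 0)
    {v : W} (hv : B v = 0) (hcv : B (c v) = 0) : v = 0 := by
  let ω : Fin (n + n) → W →ₗ[ℂ] W →ₗ[ℂ] ℂ := fun i => if (i : ℕ) < n then B else conjForm B c
  refine eq_zero_of_wedgeMany_ne_zero (ω := ω) (fun i => ?_) hdim (x := x) ?_ fun i => ?_
  · dsimp only [ω]
    split_ifs
    exacts [hB, isAlt_conjForm hB]
  · convert hx using 2
    · rfl
    · funext i v
      dsimp only [ω]
      split_ifs <;> rfl
  · dsimp only [ω]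
    split_ifs
    exacts [hv, (conjForm_apply_eq_zero_iff hc).2 hcv]

end Conjugation

section BaseChange

open ComplexConjugate TensorProduct

variable {V : Type*} [AddCommGroup V] [Module ℝ V] {σ : ℂ ⊗[ℝ] V →ₗ[ℝ] ℂ ⊗[ℝ] V}

lemma map_smul_of_map_tmul (hσ : ∀ (z : ℂ) (v : V), σ (z ⊗ₜ v) = conj z ⊗ₜ v) (z : ℂ)
    (w : ℂ ⊗[ℝ] V) : σ (z • w) = conj z • σ w := by
  induction w using TensorProduct.induction_on with
  | zero => simp
  | tmul c v => simp [smul_tmul', hσ]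
  | add u v hu hv => simp [hu, hv]

lemma involutive_of_map_tmul (hσ : ∀ (z : ℂ) (v : V), σ (z ⊗ₜ v) = conj z ⊗ₜ v) :
    Involutive σ := fun w => by
  induction w using TensorProduct.induction_on with
  | zero => simp
  | tmul c v => simp [hσ]
  | add u v hu hv => simp [hu, hv]

end BaseChange

end CSymplectic

open CSymplectic

/-- the linear algebra of C-symplectic forms.  If `V` is a real vector space
of dimension `4n` and `Ω` is an alternating `ℂ`-bilinear form on `V ⊗_ℝ ℂ` with
`Ω^{n+1} = 0` and `Ωⁿ∧Ω̄ⁿ ≠ 0`, then the kernel `K = {v : v ⌟ Ω = 0}` has complex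
dimension `2n`, meets its complex conjugate `K̄` trivially, and `V ⊗_ℝ ℂ = K ⊕ K̄`. -/
theorem statement7 {V : Type*} [AddCommGroup V] [Module ℝ V] [FiniteDimensional ℝ V]
    (n : ℕ) (hdim : Module.finrank ℝ V = 4 * n)
    (Ω : (ℂ ⊗[ℝ] V) →ₗ[ℂ] (ℂ ⊗[ℝ] V) →ₗ[ℂ] ℂ)
    (hΩalt : ∀ v, Ω v v = 0)
    -- `σconj` is the complex conjugation of `V ⊗_ℝ ℂ`, induced by `v ⊗ z ↦ v ⊗ z̄`
    (σconj : (ℂ ⊗[ℝ] V) →ₗ[ℝ] (ℂ ⊗[ℝ] V))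
    (hσ : ∀ (z : ℂ) (v : V), σconj (z ⊗ₜ[ℝ] v) = (starRingEnd ℂ z) ⊗ₜ[ℝ] v)
    -- `Ω^{n+1} = 0` as an alternating `(2n+2)`-form
    (hpow : ∀ x : Fin ((n + 1) + (n + 1)) → ℂ ⊗[ℝ] V,
      Stmt.wedgeMany (n + 1) (fun _ => fun v => Ω (v 0) (v 1)) x = 0)
    -- `Ωⁿ ∧ Ω̄ⁿ ≠ 0` as a `4n`-form
    (hnz : ∃ x : Fin ((n + n) + (n + n)) → ℂ ⊗[ℝ] V,
      Stmt.wedgeMany (n + n)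
        (fun i => if (i : ℕ) < n then (fun v => Ω (v 0) (v 1))
          else (fun v => starRingEnd ℂ (Ω (σconj (v 0)) (σconj (v 1))))) x ≠ 0) :
    Module.finrank ℂ (LinearMap.ker Ω) = 2 * n ∧
    (∀ v : ℂ ⊗[ℝ] V, Ω v = 0 → Ω (σconj v) = 0 → v = 0) ∧
    (∀ v : ℂ ⊗[ℝ] V, ∃ a b : ℂ ⊗[ℝ] V, Ω a = 0 ∧ Ω (σconj b) = 0 ∧ v = a + b) := by
  have hW : Module.finrank ℂ (ℂ ⊗[ℝ] V) = 4 * n := by rw [Module.finrank_baseChange, hdim]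
  let c : ℂ ⊗[ℝ] V →ₗ⋆[ℂ] ℂ ⊗[ℝ] V :=
    { toFun := σconj, map_add' := σconj.map_add, map_smul' := map_smul_of_map_tmul hσ }
  have hc : Function.Involutive c := involutive_of_map_tmul hσ
  have hker : ∀ v, conjForm Ω c v = 0 ↔ Ω (σconj v) = 0 := fun v => conjForm_apply_eq_zero_iff hc
  obtain ⟨x, hx⟩ := hnz
  have hdisj : ∀ v, Ω v = 0 → Ω (σconj v) = 0 → v = 0 := fun v =>
    eq_zero_of_wedgeMany_conj_ne_zero hΩalt hc (by omega) hx
  have hinf : Disjoint (LinearMap.ker Ω) (LinearMap.ker (conjForm Ω c)) :=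
    Submodule.disjoint_def.2 fun v hv hv' => hdisj v hv ((hker v).1 hv')
  have hupper := Submodule.finrank_add_finrank_le_of_disjoint hinf
  rw [finrank_ker_conjForm hc] at hupper
  have hlower := finrank_add_one_lt_of_wedgeMany_eq_zero hΩalt hpow
  have htop := Submodule.eq_top_of_disjoint _ _ (by rw [finrank_ker_conjForm hc]; omega) hinf
  refine ⟨by omega, hdisj, fun v => ?_⟩
  obtain ⟨a, ha, b, hb, rfl⟩ := Submodule.mem_sup.1 (htop ▸ Submodule.mem_top : v ∈ _)
  exact ⟨a, b, ha, (hker b).1 hb, rfl⟩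
end
end
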